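/- arXiv:2503.12219 — 2 statements merged into one kernel-verified Lean document; each statement's English description precedes it below -/
import Mathlib

section
/- Any homogeneous polynomial of degree D ≥ 2 in two real variables which is a product of D real linear forms, pairwise distinct up to nonzero scalar multiples, is hyperbolic. -/
open MvPolynomial Real

/-- The Hessian polynomial `f_xx * f_yy - f_xy ^ 2` of a bivariate real polynomial. -/
noncomputable def Hess (f : MvPolynomial (Fin 2) ℝ) : MvPolynomial (Fin 2) ℝ :=
  pderiv 0 (pderiv 0 f) * pderiv 1 (pderiv 1 f) - (pderiv 1 (pderiv 0 f)) ^ 2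

/-- A bivariate polynomial is hyperbolic if its Hessian is negative off the origin. -/
def Hyperbolic (f : MvPolynomial (Fin 2) ℝ) : Prop :=
  ∀ x y : ℝ, ¬(x = 0 ∧ y = 0) → eval ![x, y] (Hess f) < 0

/-!
Let `f = ∏ Lᵢ` with `Lᵢ = aᵢ x + bᵢ y`, `i = 0, …, n`. Euler's identity for the form `f` of degree
`n + 1` gives `x² Hess f = n ((n + 1) f f_yy - n f_y²)`. Writing `τᵢ = bᵢ ∏_{m ≠ i} L_m`, we have
`f_y = ∑ τᵢ` and `f f_yy - f_y² = -∑ τᵢ²`, so the right-hand side is `-(n / 2) ∑_{i,j} (τᵢ - τⱼ)²`;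
moreover `τᵢ - τⱼ = -x δᵢⱼ Pᵢⱼ` with `δᵢⱼ = aᵢ bⱼ - aⱼ bᵢ` and `Pᵢⱼ = ∏_{m ≠ i, j} L_m`. Adding the
same computation in `y` and cancelling `x² + y²` gives the closed form
`2 Hess f = -n ∑_{i,j} δᵢⱼ² Pᵢⱼ²`. At a point `p ≠ 0` at most one of the distinct lines vanishes,
so some term with `δᵢⱼ ≠ 0` and `Pᵢⱼ(p) ≠ 0` survives and `Hess f (p) < 0`.
-/

open Finset

theorem Finset.sum_sum_sub_sq {ι R : Type*} [CommRing R] (s : Finset ι) (f : ι → R) :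
    ∑ i ∈ s, ∑ j ∈ s, (f i - f j) ^ 2 = 2 * (#s * ∑ i ∈ s, f i ^ 2 - (∑ i ∈ s, f i) ^ 2) := by
  simp only [sub_sq, sum_add_distrib, sum_sub_distrib, sum_const, nsmul_eq_mul, ← mul_sum,
    ← sum_mul]
  ring

theorem Finset.mul_prod_erase_sub_mul_prod_erase {ι A : Type*} [CommRing A] [DecidableEq ι]
    {s : Finset ι} {i j : ι} (hi : i ∈ s) (hj : j ∈ s) (c g : ι → A) :
    c i * ∏ m ∈ s.erase i, g m - c j * ∏ m ∈ s.erase j, g m =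
      (c i * g j - c j * g i) * ∏ m ∈ (s.erase i).erase j, g m := by
  obtain rfl | hij := eq_or_ne i j
  · ring
  rw [← mul_prod_erase (s.erase i) g (mem_erase.2 ⟨hij.symm, hj⟩),
    ← mul_prod_erase (s.erase j) g (mem_erase.2 ⟨hij, hi⟩), erase_right_comm]
  ring

namespace Derivation

variable {R A ι : Type*} [CommSemiring R] [DecidableEq ι]

theorem leibniz_prod {M : Type*} [CommSemiring A] [AddCommMonoid M] [Algebra R A] [Module A M]
    [Module R M] (D : Derivation R A M) (s : Finset ι) (g : ι → A) :
    D (∏ i ∈ s, g i) = ∑ i ∈ s, (∏ j ∈ s.erase i, g j) • D (g i) := by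
  induction s using Finset.induction_on with
  | empty => simp
  | insert a s ha ih =>
    rw [prod_insert ha, leibniz, ih, sum_insert ha, erase_insert ha, smul_sum, add_comm]
    congr 1
    refine sum_congr rfl fun i hi => ?_
    rw [erase_insert_of_ne (ne_of_mem_of_not_mem hi ha).symm,
      prod_insert fun h => ha (mem_of_mem_erase h), smul_smul]

variable [CommRing A] [Algebra R A] (D : Derivation R A A)

/-- Division-free form of `(f' / f)' = -∑ (gᵢ' / gᵢ)²`. -/
theorem prod_mul_apply_apply_prod_sub_sq (s : Finset ι) (g : ι → A)
    (hg : ∀ i ∈ s, D (D (g i)) = 0) :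
    (∏ i ∈ s, g i) * D (D (∏ i ∈ s, g i)) - D (∏ i ∈ s, g i) ^ 2 =
      -∑ i ∈ s, (D (g i) * ∏ j ∈ s.erase i, g j) ^ 2 := by
  induction s using Finset.induction_on with
  | empty => simp
  | insert a s ha ih =>
    have hga := hg a (mem_insert_self a s)
    have ih := ih fun i hi => hg i (mem_insert_of_mem hi)
    have hrest : ∀ i ∈ s, (D (g i) * ∏ j ∈ (insert a s).erase i, g j) ^ 2 =
        g a ^ 2 * (D (g i) * ∏ j ∈ s.erase i, g j) ^ 2 := fun i hi => by
      rw [erase_insert_of_ne (ne_of_mem_of_not_mem hi ha).symm,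
        prod_insert fun h => ha (mem_of_mem_erase h)]
      ring
    rw [sum_insert ha, erase_insert ha, sum_congr rfl hrest, ← mul_sum, prod_insert ha]
    simp only [leibniz, smul_eq_mul, map_add, hga]
    linear_combination g a ^ 2 * ih

theorem sum_sum_sq_sub_apply_mul_prod_erase {s : Finset ι} {n : ℕ} (hs : #s = n + 1)
    (g : ι → A) (hg : ∀ i ∈ s, D (D (g i)) = 0) :
    ∑ i ∈ s, ∑ j ∈ s, (D (g i) * ∏ m ∈ s.erase i, g m - D (g j) * ∏ m ∈ s.erase j, g m) ^ 2 =
      -(2 • ((n + 1) • ((∏ i ∈ s, g i) * D (D (∏ i ∈ s, g i))) - n • D (∏ i ∈ s, g i) ^ 2)) := by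
  have hD : D (∏ i ∈ s, g i) = ∑ i ∈ s, D (g i) * ∏ m ∈ s.erase i, g m := by
    simp only [leibniz_prod, smul_eq_mul, mul_comm]
  have hDD := D.prod_mul_apply_apply_prod_sub_sq s g hg
  rw [sum_sum_sub_sq, hs]
  rw [hD] at hDD ⊢
  simp only [nsmul_eq_mul, Nat.cast_add, Nat.cast_one]
  linear_combination (2 * (n + 1) : A) * hDD

end Derivation

namespace MvPolynomial

theorem pderiv_comm {R σ : Type*} [CommRing R] (i j : σ) (f : MvPolynomial σ R) :
    pderiv i (pderiv j f) = pderiv j (pderiv i f) := by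
  classical
  have h : ⁅pderiv i, pderiv j⁆ = (0 : Derivation R (MvPolynomial σ R) (MvPolynomial σ R)) :=
    derivation_ext fun k => by
      rw [Derivation.commutator_apply, pderiv_X, pderiv_X]
      simp [Pi.single_apply, apply_ite]
  simpa [Derivation.commutator_apply, sub_eq_zero] using congrArg (· f) h

theorem X_zero_sq_add_X_one_sq_ne_zero {R : Type*} [CommRing R] [Nontrivial R] :
    (X 0 ^ 2 + X 1 ^ 2 : MvPolynomial (Fin 2) R) ≠ 0 := by
  intro h
  simpa using congrArg (eval ![1, 0]) h

namespace IsHomogeneous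

variable {φ : MvPolynomial (Fin 2) ℝ} {n : ℕ}

theorem X_zero_sq_mul_hess (h : φ.IsHomogeneous (n + 1)) :
    X 0 ^ 2 * Hess φ = n • ((n + 1) • (φ * pderiv 1 (pderiv 1 φ)) - n • pderiv 1 φ ^ 2) := by
  have euler := h.sum_X_mul_pderiv
  have euler₀ := (h.pderiv (i := 0)).sum_X_mul_pderiv
  have euler₁ := (h.pderiv (i := 1)).sum_X_mul_pderiv
  simp only [Fin.sum_univ_two, nsmul_eq_mul, add_tsub_cancel_right, Nat.cast_add,
    Nat.cast_one] at euler euler₀ euler₁ ⊢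
  rw [pderiv_comm 0 1] at euler₁
  unfold Hess
  linear_combination (n * pderiv 1 (pderiv 1 φ)) * euler + (X 0 * pderiv 1 (pderiv 1 φ)) * euler₀
    - (X 0 * pderiv 1 (pderiv 0 φ) + n * pderiv 1 φ) * euler₁

theorem X_one_sq_mul_hess (h : φ.IsHomogeneous (n + 1)) :
    X 1 ^ 2 * Hess φ = n • ((n + 1) • (φ * pderiv 0 (pderiv 0 φ)) - n • pderiv 0 φ ^ 2) := by
  have euler := h.sum_X_mul_pderiv
  have euler₀ := (h.pderiv (i := 0)).sum_X_mul_pderiv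
  have euler₁ := (h.pderiv (i := 1)).sum_X_mul_pderiv
  simp only [Fin.sum_univ_two, nsmul_eq_mul, add_tsub_cancel_right, Nat.cast_add,
    Nat.cast_one] at euler euler₀ euler₁ ⊢
  rw [pderiv_comm 0 1] at euler₁
  unfold Hess
  linear_combination (n * pderiv 0 (pderiv 0 φ)) * euler + (X 1 * pderiv 0 (pderiv 0 φ)) * euler₁
    - (X 1 * pderiv 1 (pderiv 0 φ) + n * pderiv 0 φ) * euler₀

end IsHomogeneous

end MvPolynomial

section LinearForm

variable {R : Type*} [CommRing R]

noncomputable def linearForm (a b : R) : MvPolynomial (Fin 2) R := C a * X 0 + C b * X 1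

@[simp]
theorem pderiv_zero_linearForm (a b : R) : pderiv 0 (linearForm a b) = C a := by
  simp [linearForm, pderiv_X_of_ne (show (1 : Fin 2) ≠ 0 by decide)]

@[simp]
theorem pderiv_one_linearForm (a b : R) : pderiv 1 (linearForm a b) = C b := by
  simp [linearForm, pderiv_X_of_ne (show (0 : Fin 2) ≠ 1 by decide)]

@[simp]
theorem eval_linearForm (a b : R) (v : Fin 2 → R) :
    eval v (linearForm a b) = a * v 0 + b * v 1 := by
  simp [linearForm]

theorem isHomogeneous_linearForm (a b : R) : (linearForm a b).IsHomogeneous 1 :=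
  ((isHomogeneous_C _ a).mul (isHomogeneous_X _ 0)).add
    ((isHomogeneous_C _ b).mul (isHomogeneous_X _ 1))

theorem C_mul_linearForm_sub_eq_neg_X_zero_mul (a₁ b₁ a₂ b₂ : R) :
    C b₁ * linearForm a₂ b₂ - C b₂ * linearForm a₁ b₁ = -(X 0 * C (a₁ * b₂ - a₂ * b₁)) := by
  simp only [linearForm, map_sub, map_mul]
  ring

theorem C_mul_linearForm_sub_eq_X_one_mul (a₁ b₁ a₂ b₂ : R) :
    C a₁ * linearForm a₂ b₂ - C a₂ * linearForm a₁ b₁ = X 1 * C (a₁ * b₂ - a₂ * b₁) := by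
  simp only [linearForm, map_sub, map_mul]
  ring

end LinearForm

theorem two_mul_hess_prod_linearForm {ι : Type*} [Fintype ι] [DecidableEq ι] {n : ℕ}
    (hι : Fintype.card ι = n + 1) (a b : ι → ℝ) :
    2 * Hess (∏ i, linearForm (a i) (b i)) = -(n • ∑ i, ∑ j,
      (C (a i * b j - a j * b i) * ∏ m ∈ (univ.erase i).erase j, linearForm (a m) (b m)) ^ 2) := by
  have hf : (∏ i, linearForm (a i) (b i)).IsHomogeneous (n + 1) := by
    simpa [hι] using IsHomogeneous.prod univ _ (fun _ => 1)
      fun i _ => isHomogeneous_linearForm (a i) (b i)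
  have hx := hf.X_zero_sq_mul_hess
  have hy := hf.X_one_sq_mul_hess
  have hτ := (pderiv 1).sum_sum_sq_sub_apply_mul_prod_erase (card_univ.trans hι)
    (fun i => linearForm (a i) (b i)) (fun i _ => by simp)
  have hσ := (pderiv 0).sum_sum_sq_sub_apply_mul_prod_erase (card_univ.trans hι)
    (fun i => linearForm (a i) (b i)) (fun i _ => by simp)
  simp only [pderiv_zero_linearForm, pderiv_one_linearForm] at hτ hσ
  have hpair : ∀ i j, (C (b i) * ∏ m ∈ univ.erase i, linearForm (a m) (b m)
        - C (b j) * ∏ m ∈ univ.erase j, linearForm (a m) (b m)) ^ 2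
      + (C (a i) * ∏ m ∈ univ.erase i, linearForm (a m) (b m)
        - C (a j) * ∏ m ∈ univ.erase j, linearForm (a m) (b m)) ^ 2
      = (X 0 ^ 2 + X 1 ^ 2) *
        (C (a i * b j - a j * b i) * ∏ m ∈ (univ.erase i).erase j, linearForm (a m) (b m)) ^ 2 := by
    intro i j
    rw [mul_prod_erase_sub_mul_prod_erase (mem_univ i) (mem_univ j) (fun m => C (b m)),
      mul_prod_erase_sub_mul_prod_erase (mem_univ i) (mem_univ j) (fun m => C (a m)),
      C_mul_linearForm_sub_eq_neg_X_zero_mul, C_mul_linearForm_sub_eq_X_one_mul]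
    ring
  have hsum := Fintype.sum_congr _ _ fun i => Fintype.sum_congr _ _ (hpair i)
  simp only [sum_add_distrib, ← mul_sum] at hsum
  refine mul_left_cancel₀ X_zero_sq_add_X_one_sq_ne_zero ?_
  simp only [nsmul_eq_mul] at hτ hσ hx hy ⊢
  linear_combination 2 * hx + 2 * hy + n * hτ + n * hσ - n * hsum

theorem mul_sub_mul_ne_zero_of_not_proportional {K : Type*} [Field K] {a₁ b₁ a₂ b₂ : K}
    (h₂ : ¬(a₂ = 0 ∧ b₂ = 0)) (h : ∀ t : K, ¬(a₁ = t * a₂ ∧ b₁ = t * b₂)) :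
    a₁ * b₂ - a₂ * b₁ ≠ 0 := by
  intro hδ
  by_cases ha₂ : a₂ = 0
  · have hb₂ : b₂ ≠ 0 := fun hb₂ => h₂ ⟨ha₂, hb₂⟩
    refine h (b₁ / b₂) ⟨?_, by field_simp⟩
    field_simp
    linear_combination hδ
  · refine h (a₁ / a₂) ⟨by field_simp, ?_⟩
    field_simp
    linear_combination -hδ

theorem eq_zero_of_mul_sub_mul_ne_zero {R : Type*} [CommRing R] [IsDomain R]
    {a₁ b₁ a₂ b₂ x y : R} (hδ : a₁ * b₂ - a₂ * b₁ ≠ 0) (h₁ : a₁ * x + b₁ * y = 0)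
    (h₂ : a₂ * x + b₂ * y = 0) : x = 0 ∧ y = 0 := by
  refine ⟨(mul_eq_zero.1 ?_).resolve_right hδ, (mul_eq_zero.1 ?_).resolve_right hδ⟩
  · linear_combination b₂ * h₁ - b₁ * h₂
  · linear_combination a₁ * h₂ - a₂ * h₁

theorem sum_sum_sq_mul_sub_mul_mul_prod_pos {K ι : Type*} [CommRing K] [LinearOrder K]
    [IsStrictOrderedRing K] [Fintype ι] [DecidableEq ι] [Nontrivial ι] {a b : ι → K}
    (hδ : ∀ i j, i ≠ j → a i * b j - a j * b i ≠ 0) {x y : K} (hxy : ¬(x = 0 ∧ y = 0)) :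
    0 < ∑ i, ∑ j,
      ((a i * b j - a j * b i) * ∏ m ∈ (univ.erase i).erase j, (a m * x + b m * y)) ^ 2 := by
  obtain ⟨i, hi⟩ : ∃ i, ∀ m ≠ i, a m * x + b m * y ≠ 0 := by
    by_cases h : ∃ i, a i * x + b i * y = 0
    · obtain ⟨i, hi⟩ := h
      exact ⟨i, fun m hm hm₀ => hxy (eq_zero_of_mul_sub_mul_ne_zero (hδ m i hm) hm₀ hi)⟩
    · exact ⟨Classical.arbitrary ι, fun m _ => not_exists.1 h m⟩
  obtain ⟨j, hji⟩ := exists_ne i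
  refine sum_pos' (fun _ _ => sum_nonneg fun _ _ => sq_nonneg _) ⟨i, mem_univ i, ?_⟩
  refine sum_pos' (fun _ _ => sq_nonneg _) ⟨j, mem_univ j, sq_pos_of_ne_zero ?_⟩
  exact mul_ne_zero (hδ i j hji.symm)
    (prod_ne_zero_iff.2 fun m hm => hi m (mem_erase.1 (mem_of_mem_erase hm)).1)

theorem product_of_distinct_lines_hyperbolic (D : ℕ) (hD : 2 ≤ D) (a b : Fin D → ℝ)
    (hne : ∀ i, ¬(a i = 0 ∧ b i = 0))
    (hdist : ∀ i j, i ≠ j → ∀ t : ℝ, ¬(a i = t * a j ∧ b i = t * b j)) :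
    Hyperbolic (∏ i, (C (a i) * X 0 + C (b i) * X 1)) := by
  obtain ⟨n, rfl⟩ : ∃ n, D = n + 1 := ⟨D - 1, by omega⟩
  have : Nontrivial (Fin (n + 1)) := Fin.nontrivial_iff_two_le.2 hD
  intro x y hxy
  have hpos := sum_sum_sq_mul_sub_mul_mul_prod_pos (fun i j hij =>
    mul_sub_mul_ne_zero_of_not_proportional (hne j) (hdist i j hij)) hxy
  have hHess := congrArg (eval ![x, y]) (two_mul_hess_prod_linearForm (Fintype.card_fin _) a b)
  simp only [map_mul, map_neg, map_natCast, map_sum, map_pow, map_prod, eval_C, eval_ofNat,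
    eval_linearForm, nsmul_eq_mul, Matrix.cons_val_zero, Matrix.cons_val_one,
    Matrix.cons_val_fin_one] at hHess
  have hn : (0 : ℝ) < n := Nat.cast_pos.2 (by omega)
  change eval ![x, y] (Hess (∏ i, linearForm (a i) (b i))) < 0
  linarith [mul_pos hn hpos]
end

section
/- If f is a hyperbolic homogeneous polynomial of degree D in two real variables, then a nonzero point (x₀,y₀) satisfies f(x₀,y₀) = 0 only if the point is a regular point of f (the gradient of f does not vanish there); consequently, the restriction F(φ) = f(cos φ, sin φ) has only simple zeros, and the number of zeros of F in [0, 2π) equals the number of critical points of F in [0, 2π). -/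
/-!
Euler's identity, differentiated once, says that the Hessian `H` of `f` maps `(x, y)` to
`(D - 1) ∇f(x, y)`; as `H` is invertible off the origin, `∇f` cannot vanish there. On the unit
circle the same relations turn `det H < 0` into `F F'' - F'² < 0`. So the closed curve
`t ↦ (F t, F' t)` avoids the origin and its polar angle, whose derivative is
`(F F'' - F'²) / (F² + F'²)`, strictly decreases. Over one period it decreases by some `2πk`, and
the curve meets the line `F = 0` and the line `F' = 0` exactly `2k` times each.
-/

open MvPolynomial Real

namespace MvPolynomial

variable {R σ : Type*}

theorem pderiv_pderiv_comm [CommRing R] (i j : σ) (p : MvPolynomial σ R) :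
    pderiv i (pderiv j p) = pderiv j (pderiv i p) := by
  have h : ⁅pderiv (R := R) i, pderiv j⁆ = (0 : Derivation R (MvPolynomial σ R) _) := by
    classical
    refine derivation_ext fun k => ?_
    rw [Derivation.commutator_apply, pderiv_X, pderiv_X]
    by_cases hi : i = k <;> by_cases hj : j = k <;> simp [hi, hj]
  simpa [Derivation.commutator_apply, sub_eq_zero] using congrArg (· p) h

theorem IsHomogeneous.sum_mul_eval_pderiv [CommSemiring R] [Fintype σ] {p : MvPolynomial σ R}
    {n : ℕ} (hp : p.IsHomogeneous n) (x : σ → R) :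
    ∑ i, x i * eval x (pderiv i p) = n * eval x p := by
  simpa using congrArg (eval x) hp.sum_X_mul_pderiv

theorem IsHomogeneous.euler_fin_two [CommSemiring R] {p : MvPolynomial (Fin 2) R} {n : ℕ}
    (hp : p.IsHomogeneous n) (x y : R) :
    x * eval ![x, y] (pderiv 0 p) + y * eval ![x, y] (pderiv 1 p) = n * eval ![x, y] p := by
  simpa [Fin.sum_univ_two] using hp.sum_mul_eval_pderiv ![x, y]

theorem hasDerivAt_eval_comp {𝕜 : Type*} [NontriviallyNormedField 𝕜] [Fintype σ]
    (p : MvPolynomial σ 𝕜) {x : 𝕜 → σ → 𝕜} {x' : σ → 𝕜} {t : 𝕜} (hx : HasDerivAt x x' t) :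
    HasDerivAt (fun s => eval (x s) p) (∑ i, x' i * eval (x t) (pderiv i p)) t := by
  classical
  induction p using MvPolynomial.induction_on with
  | C a => simpa using hasDerivAt_const t a
  | add p q hp hq =>
    simp only [map_add, mul_add, Finset.sum_add_distrib]
    exact hp.add hq
  | mul_X p i hp =>
    simp only [map_mul, eval_X]
    refine (hp.mul (hasDerivAt_pi.mp hx i)).congr_deriv ?_
    have hX : ∑ j, x' j * (eval (x t) p * eval (x t) (pderiv j (X i))) = eval (x t) p * x' i := by
      simp [pderiv_X, Pi.single_apply, mul_comm]
    simp only [pderiv_mul, map_add, map_mul, mul_add, Finset.sum_add_distrib, hX, eval_X,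
      Finset.sum_mul, mul_assoc]

end MvPolynomial

theorem exists_eq_sqrt_mul_cos_and_eq_sqrt_mul_sin (a b : ℝ) :
    ∃ θ : ℝ, a = √(a ^ 2 + b ^ 2) * cos θ ∧ b = √(a ^ 2 + b ^ 2) * sin θ := by
  refine ⟨Complex.arg (a + b * Complex.I), ?_, ?_⟩
  · simpa [Complex.norm_add_mul_I] using (Complex.norm_mul_cos_arg (a + b * Complex.I)).symm
  · simpa [Complex.norm_add_mul_I] using (Complex.norm_mul_sin_arg (a + b * Complex.I)).symm

section PolarAngle

variable {u v u' v' : ℝ → ℝ}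

theorem hasDerivAt_cross_sq_div_normSq_eq_zero {θ : ℝ → ℝ} {t : ℝ}
    (hu : HasDerivAt u (u' t) t) (hv : HasDerivAt v (v' t) t) (hr : u t ^ 2 + v t ^ 2 ≠ 0)
    (hθ : HasDerivAt θ ((u t * v' t - v t * u' t) / (u t ^ 2 + v t ^ 2)) t) :
    HasDerivAt (fun s => (v s * cos (θ s) - u s * sin (θ s)) ^ 2 / (u s ^ 2 + v s ^ 2)) 0 t := by
  have hB := (hv.mul ((hasDerivAt_cos (θ t)).comp t hθ)).sub
    (hu.mul ((hasDerivAt_sin (θ t)).comp t hθ))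
  refine ((hB.pow 2).div ((hu.pow 2).add (hv.pow 2)) hr).congr_deriv ?_
  simp only [Pi.add_apply, Pi.sub_apply, Pi.mul_apply, Pi.pow_apply, Function.comp_apply]
  field_simp
  ring

theorem exists_polar_angle (hu : ∀ t, HasDerivAt u (u' t) t) (hv : ∀ t, HasDerivAt v (v' t) t)
    (hu' : Continuous u') (hv' : Continuous v') (hr : ∀ t, 0 < u t ^ 2 + v t ^ 2) :
    ∃ θ : ℝ → ℝ, (∀ t, HasDerivAt θ ((u t * v' t - v t * u' t) / (u t ^ 2 + v t ^ 2)) t) ∧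
      ∀ t, u t = √(u t ^ 2 + v t ^ 2) * cos (θ t) ∧ v t = √(u t ^ 2 + v t ^ 2) * sin (θ t) := by
  have hcu : Continuous u := continuous_iff_continuousAt.mpr fun t => (hu t).continuousAt
  have hcv : Continuous v := continuous_iff_continuousAt.mpr fun t => (hv t).continuousAt
  set q : ℝ → ℝ := fun t => (u t * v' t - v t * u' t) / (u t ^ 2 + v t ^ 2)
  have hq : Continuous q :=
    ((hcu.mul hv').sub (hcv.mul hu')).div ((hcu.pow 2).add (hcv.pow 2)) fun t => (hr t).ne'
  obtain ⟨θ₀, hu₀, hv₀⟩ := exists_eq_sqrt_mul_cos_and_eq_sqrt_mul_sin (u 0) (v 0)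
  set θ : ℝ → ℝ := fun t => θ₀ + ∫ s in (0 : ℝ)..t, q s
  have hθ (t : ℝ) : HasDerivAt θ (q t) t :=
    (hq.integral_hasStrictDerivAt 0 t).hasDerivAt.const_add θ₀
  have hθc : Continuous θ := continuous_iff_continuousAt.mpr fun t => (hθ t).continuousAt
  have hθ0 : θ 0 = θ₀ := by simp [θ]
  refine ⟨θ, hθ, ?_⟩
  -- `v cos θ - u sin θ` vanishes at `0`, and its square over `u² + v²` is constant
  have hres (t : ℝ) : v t * cos (θ t) - u t * sin (θ t) = 0 := by
    have hcross (s : ℝ) :=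
      hasDerivAt_cross_sq_div_normSq_eq_zero (hu s) (hv s) (hr s).ne' (hθ s)
    have hconst := is_const_of_deriv_eq_zero (fun s => (hcross s).differentiableAt)
      (fun s => (hcross s).deriv) t 0
    have h0 : v 0 * cos (θ 0) - u 0 * sin (θ 0) = 0 := by
      rw [hθ0]; linear_combination cos θ₀ * hv₀ - sin θ₀ * hu₀
    rw [h0] at hconst
    simpa [(hr t).ne'] using hconst
  set A : ℝ → ℝ := fun t => u t * cos (θ t) + v t * sin (θ t)
  have hA (t : ℝ) : A t = √(u t ^ 2 + v t ^ 2) := by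
    have hcA : Continuous A :=
      (hcu.mul (continuous_cos.comp hθc)).add (hcv.mul (continuous_sin.comp hθc))
    refine isPreconnected_univ.eq_of_sq_eq hcA.continuousOn
      ((hcu.pow 2).add (hcv.pow 2)).sqrt.continuousOn (fun s _ => ?_)
      (fun _ => (Real.sqrt_pos.mpr (hr _)).ne') (Set.mem_univ 0) ?_ (Set.mem_univ t)
    · simp only [Pi.pow_apply, Pi.add_apply, A]
      rw [Real.sq_sqrt (hr s).le]
      linear_combination (-(v s * cos (θ s) - u s * sin (θ s))) * hres s
        + (u s ^ 2 + v s ^ 2) * sin_sq_add_cos_sq (θ s)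
    · simp only [Pi.pow_apply, Pi.add_apply, A, hθ0]
      linear_combination cos θ₀ * hu₀ + sin θ₀ * hv₀ + √(u 0 ^ 2 + v 0 ^ 2) * cos_sq_add_sin_sq θ₀
  refine fun t => ⟨?_, ?_⟩
  · rw [← hA t]
    linear_combination (-(sin (θ t))) * hres t - u t * sin_sq_add_cos_sq (θ t)
  · rw [← hA t]
    linear_combination cos (θ t) * hres t - v t * sin_sq_add_cos_sq (θ t)

end PolarAngle

theorem ncard_Ioc_setOf_exists_int_eq {α β c p : ℝ} (hp : 0 < p) {n : ℤ} (h : β - α = n * p) :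
    {x ∈ Set.Ioc α β | ∃ m : ℤ, x = c + m * p}.ncard = n.toNat := by
  have himage : {x ∈ Set.Ioc α β | ∃ m : ℤ, x = c + m * p}
      = (fun m : ℤ => c + m * p) '' ↑(Finset.Ioc ⌊(α - c) / p⌋ ⌊(β - c) / p⌋) := by
    ext x
    simp only [Set.mem_ofPred_eq, Set.mem_image, Set.mem_Ioc, Finset.coe_Ioc, Int.floor_lt,
      Int.le_floor, div_lt_iff₀ hp, le_div_iff₀ hp]
    constructor
    · rintro ⟨⟨hα, hβ⟩, m, rfl⟩
      exact ⟨m, ⟨by linarith, by linarith⟩, rfl⟩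
    · rintro ⟨m, ⟨hα, hβ⟩, rfl⟩
      exact ⟨⟨by linarith, by linarith⟩, m, rfl⟩
  have hinj : Function.Injective fun m : ℤ => c + m * p := fun m k hmk => by
    simpa [hp.ne'] using hmk
  have hβ : (β - c) / p = (α - c) / p + n := by
    field_simp
    linarith
  rw [himage, Set.ncard_image_of_injective _ hinj, Set.ncard_coe_finset, Int.card_Ioc, hβ,
    Int.floor_add_intCast]
  congr 1
  ring

theorem ncard_Ico_setOf_exists_int_eq_of_strictAnti {θ : ℝ → ℝ} (hc : Continuous θ)
    (hθ : StrictAnti θ) {a b c p : ℝ} (hab : a ≤ b) (hp : 0 < p) {n : ℤ}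
    (h : θ a - θ b = n * p) :
    {t ∈ Set.Ico a b | ∃ m : ℤ, θ t = c + m * p}.ncard = n.toNat := by
  have himage : θ '' {t ∈ Set.Ico a b | ∃ m : ℤ, θ t = c + m * p}
      = {x ∈ Set.Ioc (θ b) (θ a) | ∃ m : ℤ, x = c + m * p} := by
    ext x
    constructor
    · rintro ⟨t, ⟨⟨hat, htb⟩, hm⟩, rfl⟩
      exact ⟨⟨hθ htb, hθ.antitone hat⟩, hm⟩
    · rintro ⟨⟨hbx, hxa⟩, hm⟩
      obtain ⟨t, ⟨hat, htb⟩, rfl⟩ :=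
        intermediate_value_Icc' hab hc.continuousOn ⟨hbx.le, hxa⟩
      exact ⟨t, ⟨⟨hat, htb.lt_of_ne (by rintro rfl; exact hbx.ne rfl)⟩, hm⟩, rfl⟩
  rw [← Set.ncard_image_of_injective _ hθ.injective, himage,
    ncard_Ioc_setOf_exists_int_eq hp h]

theorem ncard_cos_eq_zero_eq_ncard_sin_eq_zero {θ : ℝ → ℝ} (hc : Continuous θ)
    (hθ : StrictAnti θ) {T : ℝ} (hT : 0 ≤ T) {k : ℤ} (hk : θ 0 - θ T = 2 * π * k) :
    {t ∈ Set.Ico 0 T | cos (θ t) = 0}.ncard = {t ∈ Set.Ico 0 T | sin (θ t) = 0}.ncard := by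
  have hk' : θ 0 - θ T = ((2 * k : ℤ) : ℝ) * π := by push_cast; linarith
  have hcos : {t ∈ Set.Ico 0 T | cos (θ t) = 0}
      = {t ∈ Set.Ico 0 T | ∃ m : ℤ, θ t = π / 2 + m * π} := by
    ext t
    refine and_congr_right fun _ => ?_
    rw [Real.cos_eq_zero_iff]
    exact exists_congr fun m => ⟨fun h => by linarith, fun h => by linarith⟩
  have hsin : {t ∈ Set.Ico 0 T | sin (θ t) = 0}
      = {t ∈ Set.Ico 0 T | ∃ m : ℤ, θ t = 0 + m * π} := by
    ext t
    refine and_congr_right fun _ => ?_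
    rw [Real.sin_eq_zero_iff]
    exact exists_congr fun m => ⟨fun h => by linarith, fun h => by linarith⟩
  rw [hcos, hsin, ncard_Ico_setOf_exists_int_eq_of_strictAnti hc hθ hT pi_pos hk',
    ncard_Ico_setOf_exists_int_eq_of_strictAnti hc hθ hT pi_pos hk']

theorem ncard_zeros_eq_ncard_zeros_deriv {g g' g'' : ℝ → ℝ} {T : ℝ} (hT : 0 ≤ T)
    (hg : ∀ t, HasDerivAt g (g' t) t) (hg' : ∀ t, HasDerivAt g' (g'' t) t)
    (hg'' : Continuous g'') (hgT : Function.Periodic g T) (hg'T : Function.Periodic g' T)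
    (hneg : ∀ t, g t * g'' t - g' t ^ 2 < 0) :
    {t ∈ Set.Ico 0 T | g t = 0}.ncard = {t ∈ Set.Ico 0 T | g' t = 0}.ncard := by
  have hr (t : ℝ) : 0 < g t ^ 2 + g' t ^ 2 := by
    rcases eq_or_ne (g' t) 0 with h' | h'
    · have : g t ≠ 0 := fun h => by simpa [h, h'] using hneg t
      positivity
    · positivity
  have hg'c : Continuous g' := continuous_iff_continuousAt.mpr fun t => (hg' t).continuousAt
  obtain ⟨θ, hθ, hpolar⟩ := exists_polar_angle hg hg' hg'c hg'' hr
  have hθc : Continuous θ := continuous_iff_continuousAt.mpr fun t => (hθ t).continuousAt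
  have hanti : StrictAnti θ := strictAnti_of_deriv_neg fun t => by
    rw [(hθ t).deriv]
    exact div_neg_of_neg_of_pos (by rw [← sq]; exact hneg t) (hr t)
  have hR (t : ℝ) : √(g t ^ 2 + g' t ^ 2) ≠ 0 := (Real.sqrt_pos.mpr (hr t)).ne'
  have hwinding : ∃ k : ℤ, θ 0 - θ T = 2 * π * k := by
    have hpolarT := hpolar T
    rw [show g T = g 0 by simpa using hgT 0, show g' T = g' 0 by simpa using hg'T 0] at hpolarT
    refine Real.Angle.angle_eq_iff_two_pi_dvd_sub.mp (Real.Angle.cos_sin_inj ?_ ?_)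
    · exact mul_left_cancel₀ (hR 0) ((hpolar 0).1.symm.trans hpolarT.1)
    · exact mul_left_cancel₀ (hR 0) ((hpolar 0).2.symm.trans hpolarT.2)
  obtain ⟨k, hk⟩ := hwinding
  have hzeros : {t ∈ Set.Ico 0 T | g t = 0} = {t ∈ Set.Ico 0 T | cos (θ t) = 0} := by
    ext t
    rw [Set.mem_ofPred_eq, Set.mem_ofPred_eq, (hpolar t).1, mul_eq_zero, or_iff_right (hR t)]
  have hcrit : {t ∈ Set.Ico 0 T | g' t = 0} = {t ∈ Set.Ico 0 T | sin (θ t) = 0} := by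
    ext t
    rw [Set.mem_ofPred_eq, Set.mem_ofPred_eq, (hpolar t).2, mul_eq_zero, or_iff_right (hR t)]
  rw [hzeros, hcrit, ncard_cos_eq_zero_eq_ncard_sin_eq_zero hθc hanti hT hk]

/-- `w`, `(u, v)` and `(a, b, c)` stand for `f`, `∇f` and the Hessian entries of `f` at the unit
vector `(x, y)`, and `e` for `D - 1`; the conclusion is `F F'' - F'² < 0` at the angle of
`(x, y)`. -/
theorem mul_sub_sq_neg_of_euler_of_det_neg {e x y w u v a b c : ℝ} (he : 1 ≤ e)
    (hxy : x ^ 2 + y ^ 2 = 1) (h1 : x * u + y * v = (e + 1) * w) (h2 : x * a + y * b = e * u)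
    (h3 : x * b + y * c = e * v) (hH : a * c - b ^ 2 < 0) :
    w * (y ^ 2 * a - 2 * x * y * b + x ^ 2 * c - x * u - y * v) - (-y * u + x * v) ^ 2 < 0 := by
  -- `P Q - R² = (a c - b²) (x² + y²)²`, where `P` and `Q` are the Hessian form at `(x, y)` and at
  -- `(-y, x)` and `R` is its polar form; Euler's relations evaluate `P` and `R`
  have hP : x ^ 2 * a + 2 * x * y * b + y ^ 2 * c = e * (e + 1) * w := by
    linear_combination x * h2 + y * h3 + e * h1
  have hR : -x * y * a + (x ^ 2 - y ^ 2) * b + x * y * c = e * (-y * u + x * v) := by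
    linear_combination -y * h2 + x * h3
  have hscaled : e * (e + 1) * (w * (y ^ 2 * a - 2 * x * y * b + x ^ 2 * c - x * u - y * v)
      - (-y * u + x * v) ^ 2)
      = (a * c - b ^ 2) - e * (-y * u + x * v) ^ 2 - e * (e + 1) ^ 2 * w ^ 2 := by
    linear_combination -(y ^ 2 * a - 2 * x * y * b + x ^ 2 * c) * hP
      + (-x * y * a + (x ^ 2 - y ^ 2) * b + x * y * c + e * (-y * u + x * v)) * hR
      - e * (e + 1) * w * h1 + (a * c - b ^ 2) * (x ^ 2 + y ^ 2 + 1) * hxy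
  have he0 : 0 ≤ e := zero_le_one.trans he
  refine neg_of_mul_neg_right (a := e * (e + 1)) ?_ (by positivity)
  rw [hscaled]
  nlinarith [mul_nonneg he0 (sq_nonneg (-y * u + x * v)),
    mul_nonneg (mul_nonneg he0 (sq_nonneg (e + 1))) (sq_nonneg w)]

section Bivariate

variable {D : ℕ} {f : MvPolynomial (Fin 2) ℝ}

theorem Hyperbolic.eval_hess_neg (hyp : Hyperbolic f) {x y : ℝ} (hxy : ¬(x = 0 ∧ y = 0)) :
    eval ![x, y] (pderiv 0 (pderiv 0 f)) * eval ![x, y] (pderiv 1 (pderiv 1 f))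
      - eval ![x, y] (pderiv 1 (pderiv 0 f)) ^ 2 < 0 := by
  simpa [Hess] using hyp x y hxy

theorem Hyperbolic.gradient_ne_zero (hf : f.IsHomogeneous D) (hyp : Hyperbolic f) {x y : ℝ}
    (hxy : ¬(x = 0 ∧ y = 0)) :
    ¬(eval ![x, y] (pderiv 0 f) = 0 ∧ eval ![x, y] (pderiv 1 f) = 0) := by
  rintro ⟨hu, hv⟩
  have h0 := (hf.pderiv (i := 0)).euler_fin_two x y
  have h1 := (hf.pderiv (i := 1)).euler_fin_two x y
  rw [pderiv_pderiv_comm 0 1] at h1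
  have hH := hyp.eval_hess_neg hxy
  set a := eval ![x, y] (pderiv 0 (pderiv 0 f))
  set b := eval ![x, y] (pderiv 1 (pderiv 0 f))
  set c := eval ![x, y] (pderiv 1 (pderiv 1 f))
  rw [hu, mul_zero] at h0
  rw [hv, mul_zero] at h1
  have hx : (a * c - b ^ 2) * x = 0 := by linear_combination c * h0 - b * h1
  have hy : (a * c - b ^ 2) * y = 0 := by linear_combination -b * h0 + a * h1
  exact hxy ⟨(mul_eq_zero.mp hx).resolve_left hH.ne, (mul_eq_zero.mp hy).resolve_left hH.ne⟩

noncomputable def angularDeriv (p : MvPolynomial (Fin 2) ℝ) : MvPolynomial (Fin 2) ℝ :=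
  X 0 * pderiv 1 p - X 1 * pderiv 0 p

noncomputable def circleEval (p : MvPolynomial (Fin 2) ℝ) (t : ℝ) : ℝ :=
  eval ![cos t, sin t] p

theorem hasDerivAt_circleEval (p : MvPolynomial (Fin 2) ℝ) (t : ℝ) :
    HasDerivAt (circleEval p) (circleEval (angularDeriv p) t) t := by
  have hcurve : HasDerivAt (fun s => ![cos s, sin s]) ![-sin t, cos t] t := by
    refine hasDerivAt_pi.mpr fun i => ?_
    fin_cases i
    · exact hasDerivAt_cos t
    · exact hasDerivAt_sin t
  refine (hasDerivAt_eval_comp p hcurve).congr_deriv ?_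
  simp only [circleEval, angularDeriv, Fin.sum_univ_two, map_sub, map_mul, eval_X,
    Matrix.cons_val_zero, Matrix.cons_val_one, Matrix.cons_val_fin_one]
  ring

theorem continuous_circleEval (p : MvPolynomial (Fin 2) ℝ) : Continuous (circleEval p) :=
  continuous_iff_continuousAt.mpr fun t => (hasDerivAt_circleEval p t).continuousAt

theorem periodic_circleEval (p : MvPolynomial (Fin 2) ℝ) :
    Function.Periodic (circleEval p) (2 * π) := fun t => by
  simp only [circleEval, cos_add_two_pi, sin_add_two_pi]

theorem Hyperbolic.circleEval_mul_sub_sq_neg (hD : 2 ≤ D) (hf : f.IsHomogeneous D)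
    (hyp : Hyperbolic f) (t : ℝ) :
    circleEval f t * circleEval (angularDeriv (angularDeriv f)) t
      - circleEval (angularDeriv f) t ^ 2 < 0 := by
  have hne : ¬(cos t = 0 ∧ sin t = 0) := fun ⟨hc, hs⟩ => by
    simpa [hc, hs] using cos_sq_add_sin_sq t
  have h1 := hf.euler_fin_two (cos t) (sin t)
  have h2 := (hf.pderiv (i := 0)).euler_fin_two (cos t) (sin t)
  have h3 := (hf.pderiv (i := 1)).euler_fin_two (cos t) (sin t)
  rw [pderiv_pderiv_comm 0 1] at h3
  have he : ((D - 1 : ℕ) : ℝ) = (D - 1 : ℝ) := by rw [Nat.cast_sub (by omega), Nat.cast_one]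
  rw [he] at h2 h3
  have hD' : (1 : ℝ) ≤ D - 1 := by
    have : (2 : ℝ) ≤ D := by exact_mod_cast hD
    linarith
  have key := mul_sub_sq_neg_of_euler_of_det_neg (w := eval ![cos t, sin t] f) hD'
    (cos_sq_add_sin_sq t) (by linear_combination h1) h2 h3 (hyp.eval_hess_neg hne)
  convert key using 1
  simp only [circleEval, angularDeriv, map_sub, map_add, map_mul, Derivation.leibniz, smul_eq_mul,
    pderiv_X_self, pderiv_X_of_ne (one_ne_zero : (1 : Fin 2) ≠ 0),
    pderiv_X_of_ne (zero_ne_one : (0 : Fin 2) ≠ 1), pderiv_pderiv_comm 0 1 f, map_zero, map_one,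
    eval_X, Matrix.cons_val_zero, Matrix.cons_val_one, Matrix.cons_val_fin_one]
  ring

end Bivariate

theorem zeros_regular_and_count (D : ℕ) (hD : 2 ≤ D) (f : MvPolynomial (Fin 2) ℝ)
    (hf : f.IsHomogeneous D) (hyp : Hyperbolic f) :
    (∀ x y : ℝ, ¬(x = 0 ∧ y = 0) → eval ![x, y] f = 0 →
      ¬(eval ![x, y] (pderiv 0 f) = 0 ∧ eval ![x, y] (pderiv 1 f) = 0)) ∧
    (∀ φ : ℝ, eval ![Real.cos φ, Real.sin φ] f = 0 →
      deriv (fun t => eval ![Real.cos t, Real.sin t] f) φ ≠ 0) ∧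
    {φ ∈ Set.Ico 0 (2 * Real.pi) | eval ![Real.cos φ, Real.sin φ] f = 0}.ncard =
      {φ ∈ Set.Ico 0 (2 * Real.pi) |
        deriv (fun t => eval ![Real.cos t, Real.sin t] f) φ = 0}.ncard := by
  have hderiv (φ : ℝ) :
      deriv (fun t => eval ![cos t, sin t] f) φ = circleEval (angularDeriv f) φ :=
    (hasDerivAt_circleEval f φ).deriv
  have hneg := hyp.circleEval_mul_sub_sq_neg hD hf
  refine ⟨fun x y hxy _ => hyp.gradient_ne_zero hf hxy, fun φ hφ hφ' => ?_, ?_⟩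
  · have h := hneg φ
    rw [← hderiv, hφ'] at h
    simp [circleEval, hφ] at h
  · simp only [hderiv]
    exact ncard_zeros_eq_ncard_zeros_deriv two_pi_pos.le (hasDerivAt_circleEval f)
      (hasDerivAt_circleEval _) (continuous_circleEval _) (periodic_circleEval f)
      (periodic_circleEval _) hneg
end
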